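/- Let h, e, i > 0 with h - e - i > 0. The set of interior points (p_S, p_I, p_C) of the 2-simplex satisfying both e·p_C/(p_S+p_I) = i and h·p_S/(p_S+p_I) = h - e - i is a singleton, namely {(e(h-e-i)/(h(i+e)), e/h, i/(i+e))}. -/

import Mathlib

/-!
With `s = p_S + p_I = 1 - p_C`, the first condition `e (1 - s) = i s` is linear in `s` and forces
`s = e / (i + e)`; the second then reads `p_S = (h - e - i) s / h`, and `p_I = s - p_S = e / h`.
-/

section EggLaying

variable {h e i a b c : ℝ}

lemma add_eq_of_mul_div_eq (hie : i + e ≠ 0) (hab : a + b ≠ 0) (hsum : a + b + c = 1)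
    (hC : e * c / (a + b) = i) : a + b = e / (i + e) := by
  rw [div_eq_iff hab] at hC
  rw [eq_div_iff hie]
  linear_combination e * hsum - hC

lemma eq_of_equilibrium (hh : h ≠ 0) (hie : i + e ≠ 0) (hab : a + b ≠ 0)
    (hsum : a + b + c = 1) (hC : e * c / (a + b) = i) (hS : h * a / (a + b) = h - e - i) :
    a = e * (h - e - i) / (h * (i + e)) ∧ b = e / h ∧ c = i / (i + e) := by
  have hs := add_eq_of_mul_div_eq hie hab hsum hC
  have ha : a = e * (h - e - i) / (h * (i + e)) := by
    rw [div_eq_iff hab, hs] at hS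
    field_simp at hS ⊢
    linear_combination hS
  refine ⟨ha, ?_, ?_⟩
  · rw [eq_sub_of_add_eq' hs, ha]
    field_simp
    ring
  · rw [show c = 1 - (a + b) by linarith, hs]
    field_simp
    ring

lemma equilibrium_fst_add_snd (hh : h ≠ 0) (hie : i + e ≠ 0) :
    e * (h - e - i) / (h * (i + e)) + e / h = e / (i + e) := by
  field_simp
  ring

end EggLaying

theorem stmt_16 (h e i : ℝ) (hh : 0 < h) (he : 0 < e) (hi : 0 < i)
    (hcond : 0 < h - e - i) :
    {p : ℝ × ℝ × ℝ | 0 < p.1 ∧ 0 < p.2.1 ∧ 0 < p.2.2 ∧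
        p.1 + p.2.1 + p.2.2 = 1 ∧
        e * p.2.2 / (p.1 + p.2.1) = i ∧
        h * p.1 / (p.1 + p.2.1) = h - e - i} =
      {(e * (h - e - i) / (h * (i + e)), e / h, i / (i + e))} := by
  have hie : 0 < i + e := by positivity
  ext ⟨a, b, c⟩
  simp only [Set.mem_ofPred_eq, Set.mem_singleton_iff, Prod.mk.injEq]
  constructor
  · rintro ⟨ha, hb, -, hsum, hC, hS⟩
    exact eq_of_equilibrium hh.ne' hie.ne' (by positivity) hsum hC hS
  · rintro ⟨rfl, rfl, rfl⟩
    rw [equilibrium_fst_add_snd hh.ne' hie.ne']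
    refine ⟨by positivity, by positivity, by positivity, ?_, ?_, ?_⟩
    · field_simp
      ring
    · field_simp
    · field_simp
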